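/- Every extreme point of the polytope F_n is the cycle flow f_γ of some simple directed cycle γ in the de Bruijn graph B(n−1,s); consequently, every n-gram distribution satisfying flow balance is a convex combination of cycle flows of simple directed cycles. -/

import Mathlib

/-!
`n`-gram distributions and flow balance on the de Bruijn graph.

We fix a finite alphabet `σ` with `s = |σ| ≥ 2` and an order `n = k + 1 ≥ 2`
(so contexts have length `k = n − 1 ≥ 1`).  An `n`-gram is a function
`Fin (k+1) → σ`; a context is a function `Fin k → σ`.  For an `n`-gram `g`,
`gInit g` is its length-`k` prefix (the source vertex of the corresponding
de Bruijn edge) and `gTail g` its length-`k` suffix (the target vertex).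
The `n`-gram `c·a` is `Fin.snoc c a` and `x·c` is `Fin.cons x c`; the shift
`σ(c,a)` is `gTail (Fin.snoc c a)`.
-/

open Finset

variable {σ : Type*}

/-- Length-`k` prefix of an `n`-gram (`n = k+1`): the source vertex of the edge. -/
def gInit {k : ℕ} (g : Fin (k + 1) → σ) : Fin k → σ := fun i => g i.castSucc

/-- Length-`k` suffix of an `n`-gram: the target vertex of the edge; also the
shift map, `σ(c,a) = gTail (Fin.snoc c a)`. -/
def gTail {k : ℕ} (g : Fin (k + 1) → σ) : Fin k → σ := fun i => g i.succ

/-- An `n`-gram distribution: nonnegative and summing to `1`. -/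
def IsDist [Fintype σ] [DecidableEq σ] {k : ℕ} (ρ : (Fin (k + 1) → σ) → ℝ) : Prop :=
  (∀ g, 0 ≤ ρ g) ∧ ∑ g, ρ g = 1

/-- `L(c) = Σ_a ρ(c·a)`: mass of `n`-grams beginning with context `c`. -/
def Lmass [Fintype σ] [DecidableEq σ] {k : ℕ}
    (ρ : (Fin (k + 1) → σ) → ℝ) (c : Fin k → σ) : ℝ :=
  ∑ a, ρ (Fin.snoc c a)

/-- `R(c) = Σ_x ρ(x·c)`: mass of `n`-grams ending with context `c`. -/
def Rmass [Fintype σ] [DecidableEq σ] {k : ℕ}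
    (ρ : (Fin (k + 1) → σ) → ℝ) (c : Fin k → σ) : ℝ :=
  ∑ x, ρ (Fin.cons x c)

/-- Flow balance: `L(c) = R(c)` for every context `c`. -/
def FlowBalance [Fintype σ] [DecidableEq σ] {k : ℕ}
    (ρ : (Fin (k + 1) → σ) → ℝ) : Prop :=
  ∀ c, Lmass ρ c = Rmass ρ c

/-- The polytope `F_n` of `n`-gram distributions satisfying flow balance
(the circulation polytope of the de Bruijn graph `B(n−1,s)`). -/
def FlowPolytope (σ : Type*) [Fintype σ] [DecidableEq σ] (k : ℕ) :
    Set ((Fin (k + 1) → σ) → ℝ) :=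
  {ρ | IsDist ρ ∧ FlowBalance ρ}

/-- A simple directed cycle in the de Bruijn graph `B(n−1,s)`: a cyclically ordered
list of `p ≥ 1` edges (`n`-grams) whose sources are pairwise distinct vertices and in
which the target of each edge is the source of the next. -/
structure SimpleCycle (σ : Type*) (k : ℕ) where
  /-- number of edges (`n`-grams) traversed -/
  p : ℕ
  ppos : 0 < p
  /-- the traversed edges, in cyclic order -/
  edge : Fin p → (Fin (k + 1) → σ)
  /-- the cycle is simple: visited vertices are pairwise distinct -/
  simple : Function.Injective fun i => gInit (edge i)
  /-- consecutive edges are incident head-to-tail (cyclically) -/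
  cyc : ∀ i : Fin p,
    gTail (edge i) = gInit (edge ⟨(i.val + 1) % p, Nat.mod_lt _ i.pos⟩)

attribute [local instance] Classical.propDecidable

/-- The cycle flow `f_γ`: the uniform distribution assigning mass `1/p` to each of the
`p` `n`-grams traversed by the simple cycle `γ`, and `0` to all others. -/
noncomputable def cycleFlow {σ : Type*} {k : ℕ} (γ : SimpleCycle σ k) :
    (Fin (k + 1) → σ) → ℝ :=
  fun g => if g ∈ Set.range γ.edge then 1 / (γ.p : ℝ) else 0

/-!
If `ρ ≥ 0` is balanced and nonzero, pick at every vertex with positive out-mass a positive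
out-edge. By balance its head again has positive out-mass, so following the chosen edges is a
self-map of a finite set of vertices, and any periodic orbit of it is a simple cycle on which
`ρ` is positive. Subtracting `t · p · f_γ`, where `t` is the least mass of `ρ` along the cycle,
keeps `ρ` nonnegative and balanced and shrinks its support. By induction on the support, `ρ` is
a nonnegative combination of cycle flows, of total weight `∑ ρ` since every cycle flow has mass
one. Hence `F_n` is the convex hull of the cycle flows, and the extreme points of a convex hull
lie in the generating set.
-/

theorem Function.exists_iterate_mem_periodicPts {α : Type*} [Finite α] (f : α → α) (x : α) :
    ∃ n, f^[n] x ∈ Function.periodicPts f := by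
  obtain ⟨i, j, hij, h⟩ := Finite.exists_ne_map_eq_of_infinite fun n => f^[n] x
  wlog hlt : i < j generalizing i j
  · exact this j i hij.symm h.symm (by omega)
  refine ⟨i, j - i, by omega, ?_⟩
  change f^[j - i] (f^[i] x) = f^[i] x
  rw [← Function.iterate_add_apply, Nat.sub_add_cancel hlt.le, ← h]

section NGram

variable {k : ℕ}

theorem gInit_snoc (c : Fin k → σ) (a : σ) : gInit (Fin.snoc c a : Fin (k + 1) → σ) = c := by
  funext i; simp [gInit]

theorem gTail_cons (x : σ) (c : Fin k → σ) : gTail (Fin.cons x c : Fin (k + 1) → σ) = c := by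
  funext i; simp [gTail]

theorem snoc_gInit (g : Fin (k + 1) → σ) : Fin.snoc (gInit g) (g (Fin.last k)) = g :=
  Fin.snoc_init_self g

theorem cons_gTail (g : Fin (k + 1) → σ) : Fin.cons (g 0) (gTail g) = g :=
  Fin.cons_self_tail g

variable [Fintype σ] [DecidableEq σ]

theorem Lmass_eq_sum_filter (ρ : (Fin (k + 1) → σ) → ℝ) (c : Fin k → σ) :
    Lmass ρ c = ∑ g with gInit g = c, ρ g := by
  refine Finset.sum_bij' (fun a _ => Fin.snoc c a) (fun g _ => g (Fin.last k)) ?_ ?_ ?_ ?_ ?_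
  · simp [gInit_snoc]
  · simp
  · simp
  · rintro g hg
    simp only [← (mem_filter.mp hg).2, snoc_gInit]
  · simp

theorem Rmass_eq_sum_filter (ρ : (Fin (k + 1) → σ) → ℝ) (c : Fin k → σ) :
    Rmass ρ c = ∑ g with gTail g = c, ρ g := by
  refine Finset.sum_bij' (fun x _ => Fin.cons x c) (fun g _ => g 0) ?_ ?_ ?_ ?_ ?_
  · simp [gTail_cons]
  · simp
  · simp
  · rintro g hg
    simp only [← (mem_filter.mp hg).2, cons_gTail]
  · simp

end NGram

namespace SimpleCycle

variable {k : ℕ} (γ : SimpleCycle σ k)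

theorem edge_injective : Function.Injective γ.edge :=
  fun _ _ h => γ.simple (congrArg gInit h)

theorem gTail_edge (i : Fin γ.p) : gTail (γ.edge i) = gInit (γ.edge (finRotate γ.p i)) := by
  rw [γ.cyc i]
  congr 2
  exact Fin.ext (by rw [finRotate_apply, Fin.val_add]; simp)

theorem exists_of_mapsTo [Finite σ]
    (out : (Fin k → σ) → Fin (k + 1) → σ) (hout : ∀ c, gInit (out c) = c)
    {S : Set (Fin k → σ)} (hS : Set.MapsTo (fun c => gTail (out c)) S S)
    {c₀ : Fin k → σ} (hc₀ : c₀ ∈ S) :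
    ∃ γ : SimpleCycle σ k, ∀ i, ∃ c ∈ S, γ.edge i = out c := by
  set f := fun c => gTail (out c)
  obtain ⟨n, hn⟩ := Function.exists_iterate_mem_periodicPts f c₀
  set y := f^[n] c₀
  have hyS (m : ℕ) : f^[m] y ∈ S := hS.iterate m (hS.iterate n hc₀)
  refine ⟨⟨Function.minimalPeriod f y, Function.minimalPeriod_pos_of_mem_periodicPts hn,
    fun i => out (f^[i] y), fun i j hij => ?_, fun i => ?_⟩, fun i => ⟨_, hyS i, rfl⟩⟩
  · simp only [hout] at hij
    exact Fin.ext (Function.iterate_injOn_Iio_minimalPeriod i.2 j.2 hij)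
  · rw [hout, Function.iterate_mod_minimalPeriod_eq, Function.iterate_succ_apply']

end SimpleCycle

section CycleFlow

variable {k : ℕ} (γ : SimpleCycle σ k)

theorem cycleFlow_edge (i : Fin γ.p) : cycleFlow γ (γ.edge i) = (γ.p : ℝ)⁻¹ := by
  simp [cycleFlow]

theorem cycleFlow_of_notMem_range {g : Fin (k + 1) → σ} (hg : g ∉ Set.range γ.edge) :
    cycleFlow γ g = 0 :=
  if_neg hg

theorem sum_cycleFlow_eq (s : Finset (Fin (k + 1) → σ)) :
    ∑ g ∈ s, cycleFlow γ g = #{i | γ.edge i ∈ s} / γ.p := by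
  have : {g ∈ s | g ∈ Set.range γ.edge} =
      (univ.filter fun i => γ.edge i ∈ s).map ⟨γ.edge, γ.edge_injective⟩ := by
    ext g
    simp only [mem_filter, mem_map, mem_univ, true_and, Function.Embedding.coeFn_mk]
    constructor
    · rintro ⟨hs, i, rfl⟩; exact ⟨i, hs, rfl⟩
    · rintro ⟨i, hs, rfl⟩; exact ⟨hs, i, rfl⟩
  unfold cycleFlow
  rw [← sum_filter, this]
  simp [div_eq_mul_inv]

variable [Fintype σ]

theorem sum_cycleFlow : ∑ g, cycleFlow γ g = 1 := by
  rw [sum_cycleFlow_eq]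
  simp [γ.ppos.ne']

variable [DecidableEq σ]

theorem Lmass_cycleFlow (c : Fin k → σ) :
    Lmass (cycleFlow γ) c = #{i | gInit (γ.edge i) = c} / γ.p := by
  simp only [Lmass_eq_sum_filter, sum_cycleFlow_eq, mem_filter, mem_univ, true_and]

theorem Rmass_cycleFlow (c : Fin k → σ) :
    Rmass (cycleFlow γ) c = #{i | gTail (γ.edge i) = c} / γ.p := by
  simp only [Rmass_eq_sum_filter, sum_cycleFlow_eq, mem_filter, mem_univ, true_and]

theorem flowBalance_cycleFlow : FlowBalance (cycleFlow γ) := by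
  intro c
  rw [Lmass_cycleFlow, Rmass_cycleFlow, card_equiv (finRotate γ.p).symm]
  simp only [mem_filter, mem_univ, true_and, γ.gTail_edge, Equiv.apply_symm_apply, implies_true]

end CycleFlow

section Polytope

variable (σ) [Fintype σ] [DecidableEq σ] (k : ℕ)

def flowBalanceSubmodule : Submodule ℝ ((Fin (k + 1) → σ) → ℝ) where
  carrier := {ρ | FlowBalance ρ}
  zero_mem' _ := by simp [Lmass, Rmass]
  add_mem' {ρ₁ ρ₂} h₁ h₂ c := by
    simp only [Lmass, Rmass, Pi.add_apply, sum_add_distrib]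
    exact congrArg₂ (· + ·) (h₁ c) (h₂ c)
  smul_mem' r ρ h c := by
    simp only [Lmass, Rmass, Pi.smul_apply, smul_eq_mul, ← mul_sum]
    exact congrArg (r * ·) (h c)

theorem flowPolytope_eq_inter :
    FlowPolytope σ k = stdSimplex ℝ (Fin (k + 1) → σ) ∩ flowBalanceSubmodule σ k :=
  rfl

theorem convex_flowPolytope : Convex ℝ (FlowPolytope σ k) := by
  rw [flowPolytope_eq_inter]
  exact (convex_stdSimplex ℝ _).inter (Submodule.convex _)

variable {σ k}

theorem cycleFlow_mem_flowPolytope (γ : SimpleCycle σ k) : cycleFlow γ ∈ FlowPolytope σ k :=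
  ⟨⟨fun g => by unfold cycleFlow; split_ifs <;> positivity, sum_cycleFlow γ⟩,
    flowBalance_cycleFlow γ⟩

end Polytope

section Decomposition

variable {k : ℕ} {ρ : (Fin (k + 1) → σ) → ℝ}

theorem sub_smul_cycleFlow_nonneg (hρ : 0 ≤ ρ) (γ : SimpleCycle σ k) {t : ℝ}
    (ht : ∀ i, t ≤ ρ (γ.edge i)) : 0 ≤ ρ - (t * γ.p) • cycleFlow γ := by
  intro g
  by_cases hg : g ∈ Set.range γ.edge
  · obtain ⟨i, rfl⟩ := hg
    have hp : (γ.p : ℝ) ≠ 0 := by exact_mod_cast γ.ppos.ne'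
    simp [cycleFlow_edge, hp, ht i]
  · simpa [cycleFlow_of_notMem_range γ hg] using hρ g

variable [Fintype σ]

theorem card_support_sub_smul_cycleFlow_lt (γ : SimpleCycle σ k)
    (hγ : ∀ i, 0 < ρ (γ.edge i)) (i₀ : Fin γ.p) :
    #{g | (ρ - (ρ (γ.edge i₀) * γ.p) • cycleFlow γ) g ≠ 0} < #{g | ρ g ≠ 0} := by
  have hp : (γ.p : ℝ) ≠ 0 := by exact_mod_cast γ.ppos.ne'
  refine card_lt_card ((ssubset_iff_of_subset fun g => ?_).mpr ⟨γ.edge i₀, ?_, ?_⟩)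
  · simp only [mem_filter, mem_univ, true_and, not_imp_not]
    intro hg
    have : g ∉ Set.range γ.edge := by rintro ⟨i, rfl⟩; exact (hγ i).ne' hg
    simp [hg, cycleFlow_of_notMem_range γ this]
  · simpa using (hγ i₀).ne'
  · simp [cycleFlow_edge, hp]

variable [DecidableEq σ]

theorem le_Lmass_gInit (hρ : 0 ≤ ρ) (g : Fin (k + 1) → σ) : ρ g ≤ Lmass ρ (gInit g) := by
  rw [Lmass_eq_sum_filter]
  exact single_le_sum (fun g _ => hρ g) (by simp)

theorem le_Rmass_gTail (hρ : 0 ≤ ρ) (g : Fin (k + 1) → σ) : ρ g ≤ Rmass ρ (gTail g) := by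
  rw [Rmass_eq_sum_filter]
  exact single_le_sum (fun g _ => hρ g) (by simp)

theorem exists_simpleCycle_forall_edge_pos (hρ : 0 ≤ ρ) (hbal : FlowBalance ρ)
    {g₀ : Fin (k + 1) → σ} (hg₀ : 0 < ρ g₀) :
    ∃ γ : SimpleCycle σ k, ∀ i, 0 < ρ (γ.edge i) := by
  have hletter (c : Fin k → σ) : ∃ a, 0 < Lmass ρ c → 0 < ρ (Fin.snoc c a) := by
    by_cases hc : 0 < Lmass ρ c
    · obtain ⟨a, -, ha⟩ := (sum_pos_iff_of_nonneg fun a _ => hρ (Fin.snoc c a)).mp hc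
      exact ⟨a, fun _ => ha⟩
    · exact ⟨g₀ 0, fun h => absurd h hc⟩
  choose a ha using hletter
  have hmaps : Set.MapsTo (fun c => gTail (Fin.snoc c (a c) : Fin (k + 1) → σ))
      {c | 0 < Lmass ρ c} {c | 0 < Lmass ρ c} := fun c hc => by
    change 0 < Lmass ρ _
    rw [hbal]
    exact (ha c hc).trans_le (le_Rmass_gTail hρ _)
  obtain ⟨γ, hγ⟩ := SimpleCycle.exists_of_mapsTo _ (fun c => gInit_snoc c (a c)) hmaps
    (hg₀.trans_le (le_Lmass_gInit hρ g₀))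
  refine ⟨γ, fun i => ?_⟩
  obtain ⟨c, hc, hi⟩ := hγ i
  exact hi ▸ ha c hc

theorem exists_nonneg_combination_cycleFlow (hρ : 0 ≤ ρ) (hbal : FlowBalance ρ) :
    ∃ (m : ℕ) (γs : Fin m → SimpleCycle σ k) (w : Fin m → ℝ),
      (∀ i, 0 ≤ w i) ∧ ρ = ∑ i, w i • cycleFlow (γs i) := by
  induction hN : #{g | ρ g ≠ 0} using Nat.strong_induction_on generalizing ρ with
  | _ N ih =>
  obtain hzero | ⟨g₀, hg₀⟩ : ρ = 0 ∨ ∃ g, 0 < ρ g := by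
    by_contra! h
    exact h.1 (le_antisymm h.2 hρ)
  · exact ⟨0, finZeroElim, finZeroElim, finZeroElim, by simp [hzero]⟩
  obtain ⟨γ, hγ⟩ := exists_simpleCycle_forall_edge_pos hρ hbal hg₀
  obtain ⟨i₀, -, hmin⟩ := exists_min_image univ (fun i => ρ (γ.edge i)) ⟨⟨0, γ.ppos⟩, mem_univ _⟩
  obtain ⟨m, γs, w, hw, hrest⟩ := ih _ (hN ▸ card_support_sub_smul_cycleFlow_lt γ hγ i₀)
    (sub_smul_cycleFlow_nonneg hρ γ fun i => hmin i (mem_univ i))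
    ((flowBalanceSubmodule σ k).sub_mem hbal
      ((flowBalanceSubmodule σ k).smul_mem _ (flowBalance_cycleFlow γ))) rfl
  refine ⟨m + 1, Fin.cons γ γs, Fin.cons (ρ (γ.edge i₀) * γ.p) w,
    Fin.cases (mul_pos (hγ i₀) (by exact_mod_cast γ.ppos)).le hw, ?_⟩
  rw [Fin.sum_univ_succ, Fin.cons_zero, Fin.cons_zero]
  simp only [Fin.cons_succ, ← hrest, add_sub_cancel]

end Decomposition

section ConvexHull

variable [Fintype σ] [DecidableEq σ] {k : ℕ}

theorem exists_convexCombination_cycleFlow {ρ : (Fin (k + 1) → σ) → ℝ}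
    (hρ : ρ ∈ FlowPolytope σ k) :
    ∃ (m : ℕ) (γs : Fin m → SimpleCycle σ k) (w : Fin m → ℝ),
      (∀ i, 0 ≤ w i) ∧ (∑ i, w i = 1) ∧ ρ = ∑ i, w i • cycleFlow (γs i) := by
  obtain ⟨⟨hnonneg, hsum⟩, hbal⟩ := hρ
  obtain ⟨m, γs, w, hw, rfl⟩ := exists_nonneg_combination_cycleFlow hnonneg hbal
  refine ⟨m, γs, w, hw, ?_, rfl⟩
  simp only [← hsum, Finset.sum_apply, Pi.smul_apply, smul_eq_mul]
  rw [sum_comm]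
  simp [← mul_sum, sum_cycleFlow]

theorem flowPolytope_eq_convexHull :
    FlowPolytope σ k = convexHull ℝ (Set.range (cycleFlow : SimpleCycle σ k → _)) := by
  refine subset_antisymm (fun ρ hρ => ?_) (convexHull_min ?_ (convex_flowPolytope σ k))
  · obtain ⟨m, γs, w, hw, hw₁, rfl⟩ := exists_convexCombination_cycleFlow hρ
    exact (convex_convexHull ℝ _).sum_mem (fun i _ => hw i) hw₁
      (fun i _ => subset_convexHull ℝ _ ⟨γs i, rfl⟩)
  · rintro _ ⟨γ, rfl⟩
    exact cycleFlow_mem_flowPolytope γ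

end ConvexHull

theorem extremePoints_are_cycleFlows_general [Fintype σ] [DecidableEq σ]
    (k : ℕ) :
    (∀ ρ ∈ Set.extremePoints ℝ (FlowPolytope σ k),
      ∃ γ : SimpleCycle σ k, ρ = cycleFlow γ) ∧
    (∀ ρ ∈ FlowPolytope σ k,
      ∃ (m : ℕ) (γs : Fin m → SimpleCycle σ k) (w : Fin m → ℝ),
        (∀ i, 0 ≤ w i) ∧ (∑ i, w i = 1) ∧
        ρ = ∑ i, w i • cycleFlow (γs i)) := by
  refine ⟨fun ρ hρ => ?_, fun ρ => exists_convexCombination_cycleFlow⟩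
  rw [flowPolytope_eq_convexHull] at hρ
  obtain ⟨γ, hγ⟩ := extremePoints_convexHull_subset hρ
  exact ⟨γ, hγ.symm⟩

/-- Every extreme point of the polytope `F_n` is the cycle flow `f_γ`
of some simple directed cycle `γ` in the de Bruijn graph `B(n−1,s)`; consequently,
every `n`-gram distribution satisfying flow balance is a convex combination of cycle
flows of simple directed cycles. -/
theorem extremePoints_are_cycleFlows [Fintype σ] [DecidableEq σ]
    (k : ℕ) (hk : 1 ≤ k) (hs : 2 ≤ Fintype.card σ) :
    (∀ ρ ∈ Set.extremePoints ℝ (FlowPolytope σ k),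
      ∃ γ : SimpleCycle σ k, ρ = cycleFlow γ) ∧
    (∀ ρ ∈ FlowPolytope σ k,
      ∃ (m : ℕ) (γs : Fin m → SimpleCycle σ k) (w : Fin m → ℝ),
        (∀ i, 0 ≤ w i) ∧ (∑ i, w i = 1) ∧
        ρ = ∑ i, w i • cycleFlow (γs i)) :=
  extremePoints_are_cycleFlows_general k
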